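/- For any v > 0, c > 0, and n ≥ 1, inf over 0 < s < 1/c of (log(2n) + s²v/(2(1 - cs)))/s equals √(2v·log(2n)) + c·log(2n). -/

import Mathlib

/-! Substituting `t = 1/s - c` maps `(0, 1/c)` onto `(0, ∞)` and turns the objective into
`cL + (L t + (v/2) / t)` with `L = log (2n)`. By AM-GM this is minimized at `t = √(v / (2L))`,
where it equals `cL + 2√(L v / 2) = cL + √(2vL)`, so the infimum is attained. -/

open Real Set

lemma two_mul_sqrt_mul_le_mul_add_div {a b t : ℝ} (ha : 0 ≤ a) (hb : 0 ≤ b) (ht : 0 < t) :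
    2 * √(a * b) ≤ a * t + b / t := by
  have h := two_mul_le_add_sq √(a * t) √(b / t)
  rwa [sq_sqrt (by positivity), sq_sqrt (by positivity), mul_assoc, ← sqrt_mul (by positivity),
    show a * t * (b / t) = a * b by field_simp] at h

lemma mul_sqrt_div_add_div_sqrt_div {a b : ℝ} (ha : 0 < a) (hb : 0 < b) :
    a * √(b / a) + b / √(b / a) = 2 * √(a * b) := by
  rw [sqrt_div' b ha.le, sqrt_mul ha.le]
  have hsa := sqrt_pos.2 ha
  have hsb := sqrt_pos.2 hb
  field_simp
  rw [sq_sqrt ha.le, sq_sqrt hb.le]; ring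

lemma isLeast_mul_add_div {a b : ℝ} (ha : 0 < a) (hb : 0 < b) :
    IsLeast ((fun t => a * t + b / t) '' Ioi 0) (2 * √(a * b)) :=
  ⟨⟨√(b / a), sqrt_pos.2 (div_pos hb ha), mul_sqrt_div_add_div_sqrt_div ha hb⟩,
    forall_mem_image.2 fun _ ht => two_mul_sqrt_mul_le_mul_add_div ha.le hb.le ht⟩

lemma image_inv_const_add_Ioi_zero {c : ℝ} (hc : 0 < c) :
    (fun t => (c + t)⁻¹) '' Ioi 0 = Ioo 0 (1 / c) := by
  rw [← image_image Inv.inv (c + ·), image_const_add_Ioi, add_zero, image_inv_eq_inv, inv_Ioi₀ hc,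
    one_div]

noncomputable def subGammaObjective (L v c s : ℝ) : ℝ := (L + s ^ 2 * v / (2 * (1 - c * s))) / s

lemma subGammaObjective_inv_const_add {L v c t : ℝ} (hc : 0 ≤ c) (ht : 0 < t) :
    subGammaObjective L v c (c + t)⁻¹ = c * L + (L * t + v / 2 / t) := by
  unfold subGammaObjective
  have hct : 0 < c + t := by positivity
  field_simp [ht.ne']
  ring

lemma isLeast_subGammaObjective {L v c : ℝ} (hL : 0 < L) (hv : 0 < v) (hc : 0 < c) :
    IsLeast (subGammaObjective L v c '' Ioo 0 (1 / c)) (√(2 * v * L) + c * L) := by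
  have hreparam : subGammaObjective L v c '' Ioo 0 (1 / c) =
      (c * L + ·) '' ((fun t => L * t + v / 2 / t) '' Ioi 0) := by
    rw [← image_inv_const_add_Ioi_zero hc, image_image, image_image]
    exact image_congr fun t ht => subGammaObjective_inv_const_add hc.le ht
  have hval : √(2 * v * L) = 2 * √(L * (v / 2)) := by
    rw [show 2 * v * L = 2 ^ 2 * (L * (v / 2)) by ring, sqrt_mul' _ (by positivity),
      sqrt_sq zero_le_two, mul_comm]
  rw [hreparam, hval, add_comm]
  exact (monotone_id.const_add (c * L)).map_isLeast (isLeast_mul_add_div hL (half_pos hv))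

theorem subGamma_optimization (v c : ℝ) (hv : 0 < v) (hc : 0 < c) (n : ℕ) (hn : 1 ≤ n) :
    sInf ((fun s : ℝ => (Real.log (2 * n) + s ^ 2 * v / (2 * (1 - c * s))) / s) ''
        Set.Ioo 0 (1 / c)) =
      Real.sqrt (2 * v * Real.log (2 * n)) + c * Real.log (2 * n) := by
  have hL : 0 < log (2 * n) := log_pos (by norm_cast; omega)
  exact (isLeast_subGammaObjective hL hv hc).csInf_eq
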